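/- arXiv:1007.3793 — 2 statements merged into one kernel-verified Lean document; each statement's English description precedes it below -/
import Mathlib

section
/- For any fixed real vector a = (a₁,…,aₙ), the Gaussian integral of the shifted Vandermonde determinant satisfies ∫_{ℝⁿ} e^{−Σᵢ yᵢ²} Δ(y + a) dy = π^{n/2} Δ(a), where Δ(x) = ∏_{i<j}(xᵢ − xⱼ). -/
/-!
Writing the Gaussian weight as `∏ i, exp (-y i ^ 2)` and `Δ` as a signed Vandermonde determinant
`det ((y i + a i) ^ j)`, the Leibniz expansion and Fubini turn the integral into the determinant
of the one-dimensional integrals `∫ exp (-t ^ 2) * (t + a i) ^ j`. By the binomial theorem each of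
these is `p j (a i)` for a polynomial `p j` of degree at most `j` whose `X ^ j`-coefficient is
`∫ exp (-t ^ 2) = √π`, so column reduction leaves `√π ^ n * det (a i ^ j)`.
-/

open MeasureTheory Real

/-- The Vandermonde determinant `∏_{i<j} (x i - x j)`. -/
noncomputable def vandermondeProd (n : ℕ) (x : Fin n → ℝ) : ℝ :=
  ∏ p ∈ Finset.univ.filter (fun p : Fin n × Fin n => p.1 < p.2), (x p.1 - x p.2)

open Finset Matrix Polynomial

theorem Finset.prod_filter_lt_eq_prod_prod_Ioi {α M : Type*} [Fintype α] [LinearOrder α]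
    [LocallyFiniteOrderTop α] [CommMonoid M] (f : α → α → M) :
    ∏ p ∈ univ.filter (fun p : α × α => p.1 < p.2), f p.1 p.2 = ∏ i, ∏ j ∈ Ioi i, f i j := by
  simp_rw [prod_filter, Fintype.prod_prod_type, ← prod_filter, filter_lt_eq_Ioi]

theorem vandermondeProd_eq_neg_one_pow_mul_det (n : ℕ) (x : Fin n → ℝ) :
    vandermondeProd n x
      = (-1) ^ #(univ.filter fun p : Fin n × Fin n => p.1 < p.2) * (vandermonde x).det := by
  rw [det_vandermonde, ← prod_filter_lt_eq_prod_prod_Ioi (fun i j => x j - x i),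
    vandermondeProd, ← prod_const, ← prod_mul_distrib]
  exact prod_congr rfl fun p _ => by ring

theorem Matrix.det_eval_matrixOfPolynomials_eq_prod_coeff_mul_det_vandermonde
    {R : Type*} [CommRing R] {n : ℕ} (v : Fin n → R) (p : Fin n → R[X])
    (h_deg : ∀ i, (p i).natDegree ≤ i) :
    (of fun i j => (p j).eval (v i)).det = (∏ i, (p i).coeff i) * (vandermonde v).det := by
  rw [eval_matrixOfPolynomials_eq_vandermonde_mul_matrixOfPolynomials v p h_deg, det_mul,
    det_of_isUpperTriangular (matrixOfPolynomials_blockTriangular p h_deg), mul_comm]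
  rfl

theorem integral_det_of_eq_det_of_integral {ι 𝕜 E : Type*} [Fintype ι] [DecidableEq ι]
    [RCLike 𝕜] [MeasurableSpace E] {μ : Measure E} [SigmaFinite μ] {f : ι → ι → E → 𝕜}
    (hf : ∀ i j, Integrable (f i j) μ) :
    ∫ y, (of fun i j => f i j (y i)).det ∂(Measure.pi fun _ => μ)
      = (of fun i j => ∫ t, f i j t ∂μ).det := by
  rw [← det_transpose]
  simp_rw [← det_transpose (of fun i j => f i j _), det_apply']
  simp only [transpose_apply, of_apply]
  rw [integral_finsetSum _ fun σ _ =>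
    (Integrable.fintype_prod fun i => hf i (σ i)).const_mul _]
  refine sum_congr rfl fun σ _ => ?_
  rw [integral_const_mul, integral_fintype_prod_eq_prod (fun i t => f i (σ i) t)]

theorem mul_add_pow_eq_sum {R : Type*} [CommSemiring R] (x t c : R) (k : ℕ) :
    x * (t + c) ^ k = ∑ j ∈ range (k + 1), (k.choose j * c ^ (k - j)) * (x * t ^ j) := by
  rw [add_pow, mul_sum]
  exact sum_congr rfl fun j _ => by ring

/-- `c ↦ ∫ w t * (t + c) ^ k ∂μ`, expanded binomially in the moments of `w`. -/
noncomputable def shiftedMomentPoly (μ : Measure ℝ) (w : ℝ → ℝ) (k : ℕ) : ℝ[X] :=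
  ∑ j ∈ range (k + 1), C (k.choose j * ∫ t, w t * t ^ j ∂μ) * X ^ (k - j)

section ShiftedMoments

variable {μ : Measure ℝ} {w : ℝ → ℝ}

theorem shiftedMomentPoly_natDegree_le (k : ℕ) : (shiftedMomentPoly μ w k).natDegree ≤ k :=
  natDegree_sum_le_of_forall_le _ _ fun j _ =>
    natDegree_C_mul_le _ _ |>.trans <| (natDegree_X_pow_le _).trans (Nat.sub_le k j)

theorem shiftedMomentPoly_coeff_self (k : ℕ) :
    (shiftedMomentPoly μ w k).coeff k = ∫ t, w t ∂μ := by
  rw [shiftedMomentPoly, finsetSum_coeff, sum_eq_single_of_mem 0 (by simp)]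
  · simp
  · intro j hj hj0
    have : k - j ≠ k := by have := mem_range.mp hj; omega
    rw [coeff_C_mul, coeff_X_pow, if_neg this.symm, mul_zero]

theorem integrable_mul_add_pow (hw : ∀ k : ℕ, Integrable (fun t => w t * t ^ k) μ)
    (c : ℝ) (k : ℕ) : Integrable (fun t => w t * (t + c) ^ k) μ := by
  simp_rw [mul_add_pow_eq_sum]
  exact integrable_finsetSum _ fun j _ => (hw j).const_mul _

theorem eval_shiftedMomentPoly (hw : ∀ k : ℕ, Integrable (fun t => w t * t ^ k) μ)
    (c : ℝ) (k : ℕ) : (shiftedMomentPoly μ w k).eval c = ∫ t, w t * (t + c) ^ k ∂μ := by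
  simp_rw [mul_add_pow_eq_sum]
  rw [integral_finsetSum _ fun j _ => (hw j).const_mul _, shiftedMomentPoly, eval_finsetSum]
  refine sum_congr rfl fun j _ => ?_
  rw [integral_const_mul]
  simp only [eval_mul, eval_C, eval_pow, eval_X]
  ring

theorem integral_prod_mul_det_vandermonde_add {n : ℕ} [SigmaFinite μ]
    (hw : ∀ k : ℕ, Integrable (fun t => w t * t ^ k) μ) (a : Fin n → ℝ) :
    ∫ y, (∏ i, w (y i)) * (vandermonde fun i => y i + a i).det ∂(Measure.pi fun _ => μ)
      = (∫ t, w t ∂μ) ^ n * (vandermonde a).det := by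
  have hrow (y : Fin n → ℝ) : (∏ i, w (y i)) * (vandermonde fun i => y i + a i).det
      = (of fun i j : Fin n => w (y i) * (y i + a i) ^ (j : ℕ)).det :=
    (det_mul_column _ _).symm
  simp_rw [hrow]
  rw [integral_det_of_eq_det_of_integral fun i j => integrable_mul_add_pow hw (a i) j]
  simp_rw [← eval_shiftedMomentPoly hw]
  rw [det_eval_matrixOfPolynomials_eq_prod_coeff_mul_det_vandermonde _ _
    fun j => shiftedMomentPoly_natDegree_le j]
  simp [shiftedMomentPoly_coeff_self]

end ShiftedMoments

theorem integrable_exp_neg_sq_mul_pow (k : ℕ) :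
    Integrable fun t : ℝ => exp (-t ^ 2) * t ^ k := by
  simpa [mul_comm] using integrable_rpow_mul_exp_neg_mul_sq one_pos
    (neg_one_lt_zero.trans_le k.cast_nonneg)

theorem gaussian_integral_shifted_vandermonde (n : ℕ) (a : Fin n → ℝ) :
    ∫ y : Fin n → ℝ, Real.exp (-∑ i, (y i) ^ 2) *
        vandermondeProd n (fun i => y i + a i)
      = Real.pi ^ ((n : ℝ) / 2) * vandermondeProd n a := by
  have hexp (y : Fin n → ℝ) : exp (-∑ i, y i ^ 2) = ∏ i, exp (-y i ^ 2) := by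
    rw [← sum_neg_distrib, exp_sum]
  have hpi : π ^ ((n : ℝ) / 2) = (∫ t, exp (-t ^ 2)) ^ n := by
    have hg : ∫ t, exp (-t ^ 2) = √π := by simpa using integral_gaussian 1
    rw [hg, sqrt_eq_rpow, ← rpow_mul_natCast pi_pos.le]
    ring_nf
  simp_rw [vandermondeProd_eq_neg_one_pow_mul_det, hexp, mul_left_comm _ ((-1 : ℝ) ^ _)]
  rw [integral_const_mul, hpi, volume_pi,
    integral_prod_mul_det_vandermonde_add integrable_exp_neg_sq_mul_pow a]
end

section
/- Let D_c = (1−c²)c ∂_c, B = ∂_{ξ₁}, B̃ = ∂_{ξ₂}, B₀ = ξ₁∂_{ξ₁}, B̃₀ = ξ₂∂_{ξ₂} be differential operators acting on smooth functions of (ξ₁, ξ₂, c) with 0 < c < 1. Define A = B + cB̃, Ã = cB + B̃, A₀ = B₀ + c²B̃₀ − D_c, Ã₀ = B̃₀ + c²B₀ − D_c. Then the commutators satisfy: [A, A₀] = A, [A, Ã₀] = 2cÃ − c²A, [Ã, A₀] = 2cA − c²Ã, and [Ã, Ã₀] = Ã. -/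
open Real

/-- Partial derivative in the `ξ₁` direction, for `f : (ξ₁, ξ₂, c) ↦ f(ξ₁,ξ₂,c)`. -/
noncomputable def D1 (f : ℝ × ℝ × ℝ → ℝ) (p : ℝ × ℝ × ℝ) : ℝ :=
  fderiv ℝ f p (1, 0, 0)

/-- Partial derivative in the `ξ₂` direction. -/
noncomputable def D2 (f : ℝ × ℝ × ℝ → ℝ) (p : ℝ × ℝ × ℝ) : ℝ :=
  fderiv ℝ f p (0, 1, 0)

/-- Partial derivative in the `c` direction. -/
noncomputable def D3 (f : ℝ × ℝ × ℝ → ℝ) (p : ℝ × ℝ × ℝ) : ℝ :=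
  fderiv ℝ f p (0, 0, 1)

/-- `D_c = (1 − c²) c ∂_c`. -/
noncomputable def Dc (f : ℝ × ℝ × ℝ → ℝ) (p : ℝ × ℝ × ℝ) : ℝ :=
  (1 - p.2.2 ^ 2) * p.2.2 * D3 f p

/-- `B₀ = ξ₁ ∂_{ξ₁}`. -/
noncomputable def B0 (f : ℝ × ℝ × ℝ → ℝ) (p : ℝ × ℝ × ℝ) : ℝ := p.1 * D1 f p

/-- `B̃₀ = ξ₂ ∂_{ξ₂}`. -/
noncomputable def Bt0 (f : ℝ × ℝ × ℝ → ℝ) (p : ℝ × ℝ × ℝ) : ℝ := p.2.1 * D2 f p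

/-- `A = B + c B̃ = ∂_{ξ₁} + c ∂_{ξ₂}`. -/
noncomputable def opA (f : ℝ × ℝ × ℝ → ℝ) (p : ℝ × ℝ × ℝ) : ℝ :=
  D1 f p + p.2.2 * D2 f p

/-- `Ã = c B + B̃ = c ∂_{ξ₁} + ∂_{ξ₂}`. -/
noncomputable def opAt (f : ℝ × ℝ × ℝ → ℝ) (p : ℝ × ℝ × ℝ) : ℝ :=
  p.2.2 * D1 f p + D2 f p

/-- `A₀ = B₀ + c² B̃₀ − D_c`. -/
noncomputable def opA0 (f : ℝ × ℝ × ℝ → ℝ) (p : ℝ × ℝ × ℝ) : ℝ :=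
  B0 f p + p.2.2 ^ 2 * Bt0 f p - Dc f p

/-- `Ã₀ = B̃₀ + c² B₀ − D_c`. -/
noncomputable def opAt0 (f : ℝ × ℝ × ℝ → ℝ) (p : ℝ × ℝ × ℝ) : ℝ :=
  Bt0 f p + p.2.2 ^ 2 * B0 f p - Dc f p

theorem operator_commutators (f : ℝ × ℝ × ℝ → ℝ) (hf : ContDiff ℝ (⊤ : ℕ∞) f)
    (p : ℝ × ℝ × ℝ) (hc0 : 0 < p.2.2) (hc1 : p.2.2 < 1) :
    opA (fun q => opA0 f q) p - opA0 (fun q => opA f q) p = opA f p ∧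
    opA (fun q => opAt0 f q) p - opAt0 (fun q => opA f q) p
      = 2 * p.2.2 * opAt f p - p.2.2 ^ 2 * opA f p ∧
    opAt (fun q => opA0 f q) p - opA0 (fun q => opAt f q) p
      = 2 * p.2.2 * opA f p - p.2.2 ^ 2 * opAt f p ∧
    opAt (fun q => opAt0 f q) p - opAt0 (fun q => opAt f q) p = opAt f p := by
  classical
  have hf' : ContDiff ℝ (⊤ : ℕ∞) (fderiv ℝ f) := hf.fderiv_right (by simp)
  have HD : ∀ v : ℝ × ℝ × ℝ, HasFDerivAt (fun q => fderiv ℝ f q v)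
      ((fderiv ℝ (fderiv ℝ f) p).flip v) p := by
    intro v
    have h1 : HasFDerivAt (fderiv ℝ f) (fderiv ℝ (fderiv ℝ f) p) p :=
      (hf'.differentiable (by simp) p).hasFDerivAt
    simpa using h1.clm_apply (hasFDerivAt_const v p)
  have hsymm : ∀ v w, fderiv ℝ (fderiv ℝ f) p v w = fderiv ℝ (fderiv ℝ f) p w v :=
    fun v w => (hf.contDiffAt.isSymmSndFDerivAt (by rw [minSmoothness_of_isRCLikeNormedField]; exact WithTop.coe_le_coe.mpr le_top)) v w
  have hq1 : HasFDerivAt (fun q : ℝ×ℝ×ℝ => q.1) (ContinuousLinearMap.fst ℝ ℝ (ℝ×ℝ)) p :=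
    hasFDerivAt_fst
  have hq2 : HasFDerivAt (fun q : ℝ×ℝ×ℝ => q.2.1)
      ((ContinuousLinearMap.fst ℝ ℝ ℝ).comp (ContinuousLinearMap.snd ℝ ℝ (ℝ×ℝ))) p :=
    hasFDerivAt_fst.comp p hasFDerivAt_snd
  have hq3 : HasFDerivAt (fun q : ℝ×ℝ×ℝ => q.2.2)
      ((ContinuousLinearMap.snd ℝ ℝ ℝ).comp (ContinuousLinearMap.snd ℝ ℝ (ℝ×ℝ))) p :=
    hasFDerivAt_snd.comp p hasFDerivAt_snd
  set K : (ℝ×ℝ×ℝ) →L[ℝ] (ℝ×ℝ×ℝ) →L[ℝ] ℝ := fderiv ℝ (fderiv ℝ f) p with hK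
  have hsq : HasFDerivAt (fun q : ℝ×ℝ×ℝ => q.2.2 ^ 2)
      (p.2.2 • ((ContinuousLinearMap.snd ℝ ℝ ℝ).comp (ContinuousLinearMap.snd ℝ ℝ (ℝ×ℝ)))
        + p.2.2 • ((ContinuousLinearMap.snd ℝ ℝ ℝ).comp (ContinuousLinearMap.snd ℝ ℝ (ℝ×ℝ)))) p := by
    rw [show (fun q : ℝ×ℝ×ℝ => q.2.2 ^ 2) = (fun q : ℝ×ℝ×ℝ => q.2.2 * q.2.2) from
      funext fun q => pow_two _]
    exact hq3.mul hq3
  -- derivative of A f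
  have dA : ∀ w : ℝ×ℝ×ℝ, fderiv ℝ (fun q => opA f q) p w =
      K w (1,0,0) + w.2.2 * fderiv ℝ f p (0,1,0) + p.2.2 * K w (0,1,0) := by
    intro w
    have h : HasFDerivAt (fun q => opA f q) _ p := (HD (1,0,0)).add (hq3.mul (HD (0,1,0)))
    rw [h.fderiv]
    simp [K, D1, D2, D3]
    ring
  have dAt : ∀ w : ℝ×ℝ×ℝ, fderiv ℝ (fun q => opAt f q) p w =
      p.2.2 * K w (1,0,0) + w.2.2 * fderiv ℝ f p (1,0,0) + K w (0,1,0) := by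
    intro w
    have h : HasFDerivAt (fun q => opAt f q) _ p := (hq3.mul (HD (1,0,0))).add (HD (0,1,0))
    rw [h.fderiv]
    simp [K, D1, D2, D3]
    ring
  have dA0 : ∀ w : ℝ×ℝ×ℝ, fderiv ℝ (fun q => opA0 f q) p w =
      w.1 * fderiv ℝ f p (1,0,0) + p.1 * K w (1,0,0)
        + 2 * p.2.2 * w.2.2 * p.2.1 * fderiv ℝ f p (0,1,0)
        + p.2.2 ^ 2 * w.2.1 * fderiv ℝ f p (0,1,0)
        + p.2.2 ^ 2 * p.2.1 * K w (0,1,0)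
        - (1 - 3 * p.2.2 ^ 2) * w.2.2 * fderiv ℝ f p (0,0,1)
        - (1 - p.2.2 ^ 2) * p.2.2 * K w (0,0,1) := by
    intro w
    have h : HasFDerivAt (fun q => opA0 f q) _ p :=
      ((hq1.mul (HD (1,0,0))).add (hsq.mul (hq2.mul (HD (0,1,0))))).sub
        ((((hasFDerivAt_const (1:ℝ) p).sub hsq).mul hq3).mul (HD (0,0,1)))
    rw [h.fderiv]
    simp [K, D1, D2, D3]
    ring
  have dAt0 : ∀ w : ℝ×ℝ×ℝ, fderiv ℝ (fun q => opAt0 f q) p w =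
      w.2.1 * fderiv ℝ f p (0,1,0) + p.2.1 * K w (0,1,0)
        + 2 * p.2.2 * w.2.2 * p.1 * fderiv ℝ f p (1,0,0)
        + p.2.2 ^ 2 * w.1 * fderiv ℝ f p (1,0,0)
        + p.2.2 ^ 2 * p.1 * K w (1,0,0)
        - (1 - 3 * p.2.2 ^ 2) * w.2.2 * fderiv ℝ f p (0,0,1)
        - (1 - p.2.2 ^ 2) * p.2.2 * K w (0,0,1) := by
    intro w
    have h : HasFDerivAt (fun q => opAt0 f q) _ p :=
      ((hq2.mul (HD (0,1,0))).add (hsq.mul (hq1.mul (HD (1,0,0))))).sub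
        ((((hasFDerivAt_const (1:ℝ) p).sub hsq).mul hq3).mul (HD (0,0,1)))
    rw [h.fderiv]
    simp [K, D1, D2, D3]
    ring
  have s21 : K (0,1,0) ((1:ℝ),(0:ℝ×ℝ)) = K ((1:ℝ),(0:ℝ×ℝ)) (0,1,0) := hsymm _ _
  have s31 : K (0,0,1) ((1:ℝ),(0:ℝ×ℝ)) = K ((1:ℝ),(0:ℝ×ℝ)) (0,0,1) := hsymm _ _
  have s32 : K (0,0,1) (0,1,0) = K (0,1,0) (0,0,1) := hsymm _ _
  have s21' : K (0,1,0) (1,0,0) = K (1,0,0) (0,1,0) := hsymm _ _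
  have s31' : K (0,0,1) (1,0,0) = K (1,0,0) (0,0,1) := hsymm _ _
  refine ⟨?_, ?_, ?_, ?_⟩
  · show (fderiv ℝ (fun q => opA0 f q) p (1,0,0) + p.2.2 * fderiv ℝ (fun q => opA0 f q) p (0,1,0))
      - (p.1 * fderiv ℝ (fun q => opA f q) p (1,0,0)
        + p.2.2 ^ 2 * (p.2.1 * fderiv ℝ (fun q => opA f q) p (0,1,0))
        - (1 - p.2.2 ^ 2) * p.2.2 * fderiv ℝ (fun q => opA f q) p (0,0,1))
      = fderiv ℝ f p (1,0,0) + p.2.2 * fderiv ℝ f p (0,1,0)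
    rw [dA0, dA0, dA, dA, dA]
    norm_num
    simp only [s21, s31, s32, s21', s31']
    ring
  · show (fderiv ℝ (fun q => opAt0 f q) p (1,0,0) + p.2.2 * fderiv ℝ (fun q => opAt0 f q) p (0,1,0))
      - (p.2.1 * fderiv ℝ (fun q => opA f q) p (0,1,0)
        + p.2.2 ^ 2 * (p.1 * fderiv ℝ (fun q => opA f q) p (1,0,0))
        - (1 - p.2.2 ^ 2) * p.2.2 * fderiv ℝ (fun q => opA f q) p (0,0,1))
      = 2 * p.2.2 * (p.2.2 * fderiv ℝ f p (1,0,0) + fderiv ℝ f p (0,1,0))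
        - p.2.2 ^ 2 * (fderiv ℝ f p (1,0,0) + p.2.2 * fderiv ℝ f p (0,1,0))
    rw [dAt0, dAt0, dA, dA, dA]
    norm_num
    simp only [s21, s31, s32, s21', s31']
    ring
  · show (p.2.2 * fderiv ℝ (fun q => opA0 f q) p (1,0,0) + fderiv ℝ (fun q => opA0 f q) p (0,1,0))
      - (p.1 * fderiv ℝ (fun q => opAt f q) p (1,0,0)
        + p.2.2 ^ 2 * (p.2.1 * fderiv ℝ (fun q => opAt f q) p (0,1,0))
        - (1 - p.2.2 ^ 2) * p.2.2 * fderiv ℝ (fun q => opAt f q) p (0,0,1))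
      = 2 * p.2.2 * (fderiv ℝ f p (1,0,0) + p.2.2 * fderiv ℝ f p (0,1,0))
        - p.2.2 ^ 2 * (p.2.2 * fderiv ℝ f p (1,0,0) + fderiv ℝ f p (0,1,0))
    rw [dA0, dA0, dAt, dAt, dAt]
    norm_num
    simp only [s21, s31, s32, s21', s31']
    ring
  · show (p.2.2 * fderiv ℝ (fun q => opAt0 f q) p (1,0,0) + fderiv ℝ (fun q => opAt0 f q) p (0,1,0))
      - (p.2.1 * fderiv ℝ (fun q => opAt f q) p (0,1,0)
        + p.2.2 ^ 2 * (p.1 * fderiv ℝ (fun q => opAt f q) p (1,0,0))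
        - (1 - p.2.2 ^ 2) * p.2.2 * fderiv ℝ (fun q => opAt f q) p (0,0,1))
      = p.2.2 * fderiv ℝ f p (1,0,0) + fderiv ℝ f p (0,1,0)
    rw [dAt0, dAt0, dAt, dAt, dAt]
    norm_num
    simp only [s21, s31, s32, s21', s31']
    ring
end
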